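/- If a connected simple graph G contains a cycle, then for every positive weight function μ on V_G, sup_{v ∈ V_G} μ(B(v,1))/μ(v) ≥ 3; hence C_G^0 ≥ 3. -/

import Mathlib

/-!
Let `u` be a vertex of minimal weight on a cycle. Its two cycle-neighbours are distinct and
each weighs at least `μ u`, so `μ(B(u,1)) ≥ 3 μ u`.
-/

namespace SimpleGraph

variable {V : Type*} {G : SimpleGraph V}

theorem Walk.IsCycle.exists_adj_ne_of_mem_support [DecidableEq V] {u v : V} {c : G.Walk v v}
    (hc : c.IsCycle) (hu : u ∈ c.support) :
    ∃ w₁ ∈ c.support, ∃ w₂ ∈ c.support, w₁ ≠ w₂ ∧ G.Adj u w₁ ∧ G.Adj u w₂ := by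
  have hc' := hc.rotate hu
  have hnil := hc'.not_nil
  exact ⟨_, (c.mem_support_rotate_iff u hu).mp (Walk.getVert_mem_support _ 1),
    _, (c.mem_support_rotate_iff u hu).mp (Walk.getVert_mem_support _ _),
    hc'.snd_ne_penultimate, Walk.adj_snd hnil, (Walk.adj_penultimate hnil).symm⟩

theorem add_le_sum_neighborFinset [∀ v, Fintype (G.neighborSet v)] {μ : V → ℝ}
    (hμ : ∀ v, 0 ≤ μ v) {u w₁ w₂ : V} (hne : w₁ ≠ w₂) (h₁ : G.Adj u w₁) (h₂ : G.Adj u w₂) :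
    μ w₁ + μ w₂ ≤ ∑ w ∈ G.neighborFinset u, μ w := by
  classical
  calc μ w₁ + μ w₂ = ∑ w ∈ {w₁, w₂}, μ w := (Finset.sum_pair hne).symm
    _ ≤ ∑ w ∈ G.neighborFinset u, μ w := by
      refine Finset.sum_le_sum_of_subset_of_nonneg ?_ fun w _ _ ↦ hμ w
      simp [Finset.insert_subset_iff, h₁, h₂]

end SimpleGraph

theorem stmt_8 {V : Type*} (G : SimpleGraph V) [inst : ∀ v : V, Fintype (G.neighborSet v)]
    (hcyc : ∃ (v : V) (c : G.Walk v v), c.IsCycle)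
    (μ : V → ℝ) (hμ : ∀ v, 0 < μ v) :
    ∀ C : ℝ, (∀ v : V, (μ v + ∑ w ∈ G.neighborFinset v, μ w) / μ v ≤ C) → 3 ≤ C := by
  intro C hC
  classical
  obtain ⟨v, c, hc⟩ := hcyc
  obtain ⟨u, hu, hmin⟩ := c.support.toFinset.exists_min_image μ ⟨v, by simp⟩
  rw [List.mem_toFinset] at hu
  obtain ⟨w₁, hw₁, w₂, hw₂, hne, h₁, h₂⟩ := hc.exists_adj_ne_of_mem_support hu
  have hsum := SimpleGraph.add_le_sum_neighborFinset (fun v ↦ (hμ v).le) hne h₁ h₂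
  have hw₁ := hmin w₁ (List.mem_toFinset.mpr hw₁)
  have hw₂ := hmin w₂ (List.mem_toFinset.mpr hw₂)
  calc (3 : ℝ) ≤ (μ u + ∑ w ∈ G.neighborFinset u, μ w) / μ u := by
        rw [le_div_iff₀ (hμ u)]; linarith
    _ ≤ C := hC u
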